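/- For all integers N ≥ 1, K > N and every integer δ ≥ 0, the maximum over all demands d : [K] → [N] of the smallest length of a linear δ-error-correcting delivery code for I(M_CFL, d) equals N_q[N²(K−1), 2δ+1], and this maximum is attained when d is surjective. -/

import Mathlib

open Matrix

/-- Number of distinct demands `N_e(d)`. -/
def numDistinct {K N : ℕ} (d : Fin K → Fin N) : ℕ := (Finset.univ.image d).card

/-- `E` is a linear `δ`-error-correcting delivery code of length `ℓ` for the GIC
problem `I(M_CFL, d)` induced by CFL prefetching with `N` files and `K > N` users:
receiver `(i,m)` knows the `N` coded packets `∑_a X(a,(i,j))`, `j ∈ [N]`, and, from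
any received word within Hamming distance `δ` of `E(X)`, must recover `X(d(i), m)`. -/
def IsECDeliveryCode (F : Type*) [Field F] [DecidableEq F] {N K : ℕ}
    (d : Fin K → Fin N) (δ ℓ : ℕ)
    (E : Matrix (Fin N) (Fin K × Fin N) F →ₗ[F] (Fin ℓ → F)) : Prop :=
  ∀ (i : Fin K) (m : Fin K × Fin N), ∃ Dec : (Fin ℓ → F) → (Fin N → F) → F,
    ∀ X : Matrix (Fin N) (Fin K × Fin N) F, ∀ y : Fin ℓ → F,
      hammingDist y (E X) ≤ δ →
        Dec y (fun j => ∑ a, X a (i, j)) = X (d i) m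

/-- The smallest length of a linear `δ`-error-correcting delivery code for
`I(M_CFL, d)`. -/
noncomputable def optLen (F : Type*) [Field F] [DecidableEq F] {N K : ℕ}
    (d : Fin K → Fin N) (δ : ℕ) : ℕ :=
  sInf { ℓ | ∃ E : Matrix (Fin N) (Fin K × Fin N) F →ₗ[F] (Fin ℓ → F),
    IsECDeliveryCode F d δ ℓ E }

/-- `N_q[k, d']`: the smallest length `n` of a `k`-dimensional linear code over `F`
whose distinct codewords are at Hamming distance at least `d'` from each other. -/
noncomputable def shortestCodeLen (F : Type*) [Field F] [DecidableEq F] (k d' : ℕ) : ℕ :=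
  sInf { n | ∃ C : Submodule F (Fin n → F), Module.finrank F C = k ∧
    ∀ x ∈ C, ∀ y ∈ C, x ≠ y → d' ≤ hammingDist x y }

/-! A linear map `E` is a `δ`-error-correcting delivery code iff it sends every confusable
message difference (invisible to some user's cache, yet changing that user's demand) to a word
of weight at least `2δ + 1`.

For surjective `d`, the messages invisible to one chosen user per file form a subspace of
dimension `N²(K - 1)` whose nonzero elements are all confusable, so `E` embeds it as a linear
code of minimum distance `2δ + 1`: no delivery code is shorter than `N_q[N²(K - 1), 2δ + 1]`.
Conversely, for every `d` some subspace of dimension at least `N²` contains no confusable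
message (messages spread over the demanded subfiles, or the row of an undemanded file);
composing the quotient by it with an embedding into a shortest code gives a delivery code of
length `N_q[N²(K - 1), 2δ + 1]`. -/

open Module

section Hamming

variable {ι β : Type*} [Fintype ι] [DecidableEq β]

theorem exists_hammingNorm_le_and_hammingDist_le [Zero β] {x : ι → β} {a b : ℕ}
    (hx : hammingNorm x ≤ a + b) : ∃ y : ι → β, hammingNorm y ≤ a ∧ hammingDist y x ≤ b := by
  classical
  set S := Finset.univ.filter fun k => x k ≠ 0
  obtain ⟨S₁, hS₁, hcard⟩ := Finset.exists_subset_card_eq (min_le_right a S.card)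
  refine ⟨fun k => if k ∈ S₁ then x k else 0, ?_, ?_⟩
  · calc hammingNorm _ ≤ S₁.card := Finset.card_le_card fun k hk => by
          by_contra h; simp [h] at hk
      _ ≤ a := hcard ▸ min_le_left _ _
  · have hsub : (Finset.univ.filter fun k => (if k ∈ S₁ then x k else 0) ≠ x k) ⊆ S \ S₁ :=
      fun k hk => by
        by_cases h : k ∈ S₁ <;> simp_all [S, eq_comm]
    calc hammingDist _ x ≤ (S \ S₁).card := Finset.card_le_card hsub
      _ ≤ b := by
        rw [Finset.card_sdiff_of_subset hS₁, hcard]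
        have : S.card ≤ a + b := hx
        omega

theorem exists_decoder_iff_le_hammingNorm [AddGroup β] {M S T : Type*} [AddGroup M]
    [AddGroup S] [AddGroup T] (E : M →+ ι → β) (s : M →+ S) (f : M →+ T) (δ : ℕ) :
    (∃ Dec : (ι → β) → S → T, ∀ X y, hammingDist y (E X) ≤ δ → Dec y (s X) = f X) ↔
      ∀ Z, s Z = 0 → f Z ≠ 0 → 2 * δ + 1 ≤ hammingNorm (E Z) := by
  classical
  constructor
  · rintro ⟨Dec, hDec⟩ Z hsZ hfZ
    by_contra! hZ
    obtain ⟨y, hy0, hyZ⟩ :=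
      exists_hammingNorm_le_and_hammingDist_le (a := δ) (b := δ) (x := E Z) (by omega)
    have h0 := hDec 0 y (by rwa [map_zero, hammingDist_zero_right])
    rw [map_zero, map_zero, ← hsZ, hDec Z y hyZ] at h0
    exact hfZ h0
  · intro h
    refine ⟨fun y t => if hX : ∃ X, hammingDist y (E X) ≤ δ ∧ s X = t then f hX.choose else 0,
      fun X y hy => ?_⟩
    have hX : ∃ X', hammingDist y (E X') ≤ δ ∧ s X' = s X := ⟨X, hy, rfl⟩
    obtain ⟨hy', hs⟩ := hX.choose_spec
    dsimp only
    rw [dif_pos hX]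
    by_contra hne
    have hweight := h (-X + hX.choose) (by rw [map_add, map_neg, hs, neg_add_cancel])
      (by rwa [map_add, map_neg, Ne, neg_add_eq_zero, eq_comm])
    rw [map_add, map_neg, ← hammingDist_eq_hammingNorm] at hweight
    have := hammingDist_triangle_left (E X) (E hX.choose) y
    omega

end Hamming

theorem le_hammingDist_iff_le_hammingNorm {R ι β : Type*} [Ring R] [Fintype ι]
    [AddCommGroup β] [Module R β] [DecidableEq β] (C : Submodule R (ι → β)) (D : ℕ) :
    (∀ x ∈ C, ∀ y ∈ C, x ≠ y → D ≤ hammingDist x y) ↔ ∀ x ∈ C, x ≠ 0 → D ≤ hammingNorm x := by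
  refine ⟨fun h x hx hx0 => hammingDist_zero_right x ▸ h x hx 0 C.zero_mem hx0,
    fun h x hx y hy hxy => ?_⟩
  rw [hammingDist_eq_hammingNorm]
  exact h _ (C.add_mem (C.neg_mem hx) hy) fun h0 => hxy (neg_add_eq_zero.1 h0)

theorem exists_linearMap_ker_le {F M C : Type*} [Field F] [AddCommGroup M] [Module F M]
    [FiniteDimensional F M] [AddCommGroup C]
    [Module F C] [FiniteDimensional F C] (V : Submodule F M)
    (h : finrank F M ≤ finrank F V + finrank F C) :
    ∃ E : M →ₗ[F] C, LinearMap.ker E ≤ V := by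
  have hq : finrank F (M ⧸ V) ≤ finrank F C := by
    have := V.finrank_quotient_add_finrank
    omega
  obtain ⟨ι, hι⟩ := Module.Free.exists_linearMap_injective_of_linearIndependent_of_lift_rank_le
    (Module.finBasis F C).linearIndependent (M := M ⧸ V) (by simpa [← finrank_eq_rank] using hq)
  refine ⟨ι ∘ₗ V.mkQ, fun Z hZ => ?_⟩
  rw [LinearMap.mem_ker, LinearMap.comp_apply, ← map_zero ι] at hZ
  exact (Submodule.Quotient.mk_eq_zero V).1 (hι hZ)

section Codes

variable {F : Type*} [Field F] [DecidableEq F]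

theorem exists_repetitionCode (k D : ℕ) (hD : 0 < D) :
    ∃ C : Submodule F (Fin (k * D) → F), finrank F C = k ∧
      ∀ x ∈ C, ∀ y ∈ C, x ≠ y → D ≤ hammingDist x y := by
  have hsurj : Function.Surjective (Prod.fst ∘ (finProdFinEquiv (m := k) (n := D)).symm) :=
    fun a => ⟨finProdFinEquiv (a, ⟨0, hD⟩), by simp⟩
  set ρ := LinearMap.funLeft F F (Prod.fst ∘ (finProdFinEquiv (m := k) (n := D)).symm)
  have hρ := LinearMap.funLeft_injective_of_surjective F F _ hsurj
  refine ⟨LinearMap.range ρ, by rw [LinearMap.finrank_range_of_inj hρ]; simp, ?_⟩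
  rintro _ ⟨v, rfl⟩ _ ⟨w, rfl⟩ hvw
  obtain ⟨a, ha⟩ := Function.ne_iff.1 fun h : v = w => hvw (h ▸ rfl)
  calc D = (Finset.univ : Finset (Fin D)).card := by simp
    _ ≤ hammingDist (ρ v) (ρ w) :=
      Finset.card_le_card_of_injOn (fun s => finProdFinEquiv (a, s))
        (fun s _ => Finset.mem_filter.2 ⟨Finset.mem_univ _, by
          simpa only [ρ, LinearMap.funLeft_apply, Function.comp_apply, Equiv.symm_apply_apply]
            using ha⟩)
        (fun s _ t _ hst => by simpa using hst)

variable {M ι : Type*} [AddCommGroup M] [Module F M] [Fintype ι]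

theorem finrank_map_eq_of_le_hammingNorm {D : ℕ} (hD : 0 < D) (E : M →ₗ[F] ι → F)
    {U : Submodule F M} [FiniteDimensional F U]
    (h : ∀ Z ∈ U, Z ≠ 0 → D ≤ hammingNorm (E Z)) :
    finrank F (U.map E) = finrank F U := by
  have hinj : Function.Injective (E ∘ₗ U.subtype) := by
    rw [← LinearMap.ker_eq_bot, Submodule.eq_bot_iff]
    intro Z hZ
    by_contra hZ0
    have := h Z Z.2 (by simpa using hZ0)
    rw [show E Z = 0 from hZ, hammingNorm_zero] at this
    omega
  rw [← LinearMap.finrank_range_of_inj hinj, LinearMap.range_comp, Submodule.range_subtype]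

theorem le_hammingDist_of_mem_map {D : ℕ} (E : M →ₗ[F] ι → F) {U : Submodule F M}
    (h : ∀ Z ∈ U, Z ≠ 0 → D ≤ hammingNorm (E Z)) :
    ∀ x ∈ U.map E, ∀ y ∈ U.map E, x ≠ y → D ≤ hammingDist x y := by
  refine (le_hammingDist_iff_le_hammingNorm _ D).2 ?_
  rintro _ ⟨Z, hZ, rfl⟩ hEZ
  exact h Z hZ fun h0 => hEZ (h0 ▸ map_zero E)

end Codes

section CFL

variable {F : Type*} [Field F] {N K : ℕ}

/-- The coded packets `Y_{i,1}, …, Y_{i,N}` cached by user `i`. -/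
def cachedPackets (i : Fin K) : Matrix (Fin N) (Fin K × Fin N) F →ₗ[F] Fin N → F where
  toFun X j := ∑ a, X a (i, j)
  map_add' X Y := by ext j; simp [Finset.sum_add_distrib]
  map_smul' c X := by ext j; simp [Finset.mul_sum]

/-- `Z = X - X'` for messages that some user cannot tell apart from its cache although they
differ in the file it demands. -/
def IsConfusable (d : Fin K → Fin N) (Z : Matrix (Fin N) (Fin K × Fin N) F) : Prop :=
  ∃ i, cachedPackets i Z = 0 ∧ Z (d i) ≠ 0

theorem isECDeliveryCode_iff [DecidableEq F] {d : Fin K → Fin N} {δ ℓ : ℕ}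
    {E : Matrix (Fin N) (Fin K × Fin N) F →ₗ[F] Fin ℓ → F} :
    IsECDeliveryCode F d δ ℓ E ↔ ∀ Z, IsConfusable d Z → 2 * δ + 1 ≤ hammingNorm (E Z) := by
  have criterion (i : Fin K) (m : Fin K × Fin N) :=
    exists_decoder_iff_le_hammingNorm E.toAddMonoidHom (cachedPackets i).toAddMonoidHom
      (Matrix.entryAddMonoidHom F (d i) m) δ
  constructor
  · rintro hE Z ⟨i, hiZ, hZ⟩
    obtain ⟨m, hm⟩ := Function.ne_iff.1 hZ
    exact (criterion i m).1 (hE i m) Z hiZ hm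
  · exact fun h i m => (criterion i m).2 fun Z hiZ hm => h Z ⟨i, hiZ, Function.ne_iff.2 ⟨m, hm⟩⟩

def spreadOverDemand (d : Fin K → Fin N) : (Fin N → Fin N → F) →ₗ[F]
    Matrix (Fin N) (Fin K × Fin N) F where
  toFun W := Matrix.of fun a p => if a = d p.1 then W a p.2 else 0
  map_add' W W' := by
    ext a p; simp only [Matrix.of_apply, Matrix.add_apply, Pi.add_apply]
    split_ifs <;> simp
  map_smul' c W := by
    ext a p; simp only [Matrix.of_apply, Matrix.smul_apply, Pi.smul_apply, RingHom.id_apply]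
    split_ifs <;> simp

theorem cachedPackets_spreadOverDemand (d : Fin K → Fin N) (W : Fin N → Fin N → F)
    (i : Fin K) : cachedPackets i (spreadOverDemand d W) = W (d i) := by
  ext j
  simp [cachedPackets, spreadOverDemand]

theorem spreadOverDemand_apply_eq_zero (d : Fin K → Fin N) {W : Fin N → Fin N → F}
    {a : Fin N} (hW : W a = 0) : spreadOverDemand d W a = 0 := by
  ext p
  simp [spreadOverDemand, hW]

theorem not_isConfusable_spreadOverDemand (d : Fin K → Fin N) (W : Fin N → Fin N → F) :
    ¬ IsConfusable d (spreadOverDemand d W) := by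
  rintro ⟨i, hi, hZ⟩
  rw [cachedPackets_spreadOverDemand] at hi
  exact hZ (spreadOverDemand_apply_eq_zero d hi)

theorem finrank_messages : finrank F (Matrix (Fin N) (Fin K × Fin N) F) = N ^ 2 * K := by
  simp only [finrank_matrix, Fintype.card_fin, Fintype.card_prod, finrank_self, mul_one]
  ring

theorem finrank_fin_fun_fin_fun : finrank F (Fin N → Fin N → F) = N ^ 2 := by
  simp [Module.finrank_pi_fintype, sq]

end CFL

section Bounds

variable {F : Type*} [Field F] {N K : ℕ}

theorem leftInverse_cachedPackets_spreadOverDemand {d : Fin K → Fin N}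
    (hd : Function.Surjective d) :
    Function.LeftInverse
      (LinearMap.pi fun a => cachedPackets (F := F) (Function.surjInv hd a) :
        Matrix (Fin N) (Fin K × Fin N) F →ₗ[F] Fin N → Fin N → F)
      (spreadOverDemand d) := fun W => funext fun a => by
  rw [LinearMap.pi_apply, cachedPackets_spreadOverDemand, Function.surjInv_eq hd]

theorem exists_submodule_not_isConfusable (d : Fin K → Fin N) (hK : N ≤ K) :
    ∃ V : Submodule F (Matrix (Fin N) (Fin K × Fin N) F),
      N ^ 2 ≤ finrank F V ∧ ∀ Z ∈ V, ¬ IsConfusable d Z := by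
  by_cases hd : Function.Surjective d
  · refine ⟨LinearMap.range (spreadOverDemand d), ?_, ?_⟩
    · rw [LinearMap.finrank_range_of_inj
        (leftInverse_cachedPackets_spreadOverDemand hd).injective, finrank_fin_fun_fin_fun]
    · rintro _ ⟨W, rfl⟩
      exact not_isConfusable_spreadOverDemand d W
  · -- the row of a file nobody demands never meets a demand
    obtain ⟨b, hb⟩ := not_forall.1 hd
    set row := (Matrix.ofLinearEquiv F).toLinearMap ∘ₗ
      LinearMap.single F (fun _ : Fin N => Fin K × Fin N → F) b
    have hrow : Function.Injective row := fun _ _ h =>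
      Pi.single_injective (M := fun _ => Fin K × Fin N → F) b
        ((Matrix.ofLinearEquiv F).injective h)
    refine ⟨LinearMap.range row, ?_, ?_⟩
    · rw [LinearMap.finrank_range_of_inj hrow]
      simpa [sq] using Nat.mul_le_mul_right N hK
    · rintro _ ⟨v, rfl⟩ ⟨i, -, hZ⟩
      exact hZ (Pi.single_eq_of_ne (M := fun _ => Fin K × Fin N → F) (fun h => hb ⟨i, h⟩) v)

variable [DecidableEq F]

theorem exists_isECDeliveryCode_of_code (d : Fin K → Fin N) (hK : N < K) {δ n : ℕ}
    {C : Submodule F (Fin n → F)} (hC : finrank F C = N ^ 2 * (K - 1))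
    (hdist : ∀ x ∈ C, ∀ y ∈ C, x ≠ y → 2 * δ + 1 ≤ hammingDist x y) :
    ∃ E : Matrix (Fin N) (Fin K × Fin N) F →ₗ[F] Fin n → F, IsECDeliveryCode F d δ n E := by
  obtain ⟨V, hV, hVconf⟩ := exists_submodule_not_isConfusable (F := F) d hK.le
  obtain ⟨E, hE⟩ := exists_linearMap_ker_le V (C := C) (by
    rw [finrank_messages, hC, Nat.mul_sub_one]
    have := Nat.le_mul_of_pos_right (N ^ 2) (by omega : 0 < K)
    omega)
  refine ⟨C.subtype ∘ₗ E, isECDeliveryCode_iff.2 fun Z hZ => ?_⟩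
  have hEZ : E Z ≠ 0 := fun h => hVconf Z (hE h) hZ
  exact (le_hammingDist_iff_le_hammingNorm C _).1 hdist _ (E Z).2 (by simpa using hEZ)

theorem exists_code_of_isECDeliveryCode {d : Fin K → Fin N} (hd : Function.Surjective d)
    {δ ℓ : ℕ} {E : Matrix (Fin N) (Fin K × Fin N) F →ₗ[F] Fin ℓ → F}
    (hE : IsECDeliveryCode F d δ ℓ E) :
    ∃ C : Submodule F (Fin ℓ → F), finrank F C = N ^ 2 * (K - 1) ∧
      ∀ x ∈ C, ∀ y ∈ C, x ≠ y → 2 * δ + 1 ≤ hammingDist x y := by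
  set ψ := (LinearMap.pi fun a => cachedPackets (F := F) (Function.surjInv hd a) :
    Matrix (Fin N) (Fin K × Fin N) F →ₗ[F] Fin N → Fin N → F)
  -- a message hidden from the users `surjInv hd a` confuses one of them unless it is zero
  have hweight : ∀ Z ∈ LinearMap.ker ψ, Z ≠ 0 → 2 * δ + 1 ≤ hammingNorm (E Z) := by
    intro Z hZ hZ0
    obtain ⟨a, ha⟩ := Function.ne_iff.1 hZ0
    refine isECDeliveryCode_iff.1 hE Z
      ⟨Function.surjInv hd a, congrFun (LinearMap.mem_ker.1 hZ) a, ?_⟩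
    rwa [Function.surjInv_eq hd]
  refine ⟨(LinearMap.ker ψ).map E, ?_, le_hammingDist_of_mem_map E hweight⟩
  have hrank := LinearMap.finrank_range_add_finrank_ker ψ
  rw [LinearMap.range_eq_top.2 (leftInverse_cachedPackets_spreadOverDemand hd).surjective,
    finrank_top, finrank_messages, finrank_fin_fun_fin_fun] at hrank
  rw [finrank_map_eq_of_le_hammingNorm (Nat.succ_pos _) E hweight, Nat.mul_sub_one]
  omega

end Bounds

theorem optLen_worst_CFL_KgtN_general (F : Type*) [Field F] [DecidableEq F]
    (N K : ℕ) (hN : 1 ≤ N) (hK : N < K) (δ : ℕ) :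
    (⨆ d : Fin K → Fin N, optLen F d δ) =
      shortestCodeLen F (N ^ 2 * (K - 1)) (2 * δ + 1) ∧
    ∀ d : Fin K → Fin N, Function.Surjective d →
      optLen F d δ = shortestCodeLen F (N ^ 2 * (K - 1)) (2 * δ + 1) := by
  have hlens_sub (d : Fin K → Fin N) :
      { n | ∃ C : Submodule F (Fin n → F), finrank F C = N ^ 2 * (K - 1) ∧
        ∀ x ∈ C, ∀ y ∈ C, x ≠ y → 2 * δ + 1 ≤ hammingDist x y } ⊆
      { ℓ | ∃ E : Matrix (Fin N) (Fin K × Fin N) F →ₗ[F] (Fin ℓ → F),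
        IsECDeliveryCode F d δ ℓ E } :=
    fun _ ⟨_, hC, hdist⟩ => exists_isECDeliveryCode_of_code d hK hC hdist
  have hsurj (d : Fin K → Fin N) (hd : Function.Surjective d) :
      optLen F d δ = shortestCodeLen F (N ^ 2 * (K - 1)) (2 * δ + 1) :=
    congrArg sInf <| (hlens_sub d).antisymm' fun _ ⟨_, hE⟩ =>
      exists_code_of_isECDeliveryCode hd hE
  have hle (d : Fin K → Fin N) :
      optLen F d δ ≤ shortestCodeLen F (N ^ 2 * (K - 1)) (2 * δ + 1) :=
    csInf_le_csInf (OrderBot.bddBelow _)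
      ⟨_, exists_repetitionCode (N ^ 2 * (K - 1)) (2 * δ + 1) (Nat.succ_pos _)⟩ (hlens_sub d)
  have : Nonempty (Fin N) := ⟨⟨0, hN⟩⟩
  have hd₀ := Function.invFun_surjective (Fin.castLE_injective hK.le)
  refine ⟨le_antisymm (ciSup_le hle) ?_, hsurj⟩
  rw [← hsurj _ hd₀]
  exact le_ciSup (Set.finite_range fun d : Fin K → Fin N => optLen F d δ).bddAbove _

theorem optLen_worst_CFL_KgtN (F : Type*) [Field F] [Fintype F] [DecidableEq F]
    (N K : ℕ) (hN : 1 ≤ N) (hK : N < K) (δ : ℕ) :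
    (⨆ d : Fin K → Fin N, optLen F d δ) =
      shortestCodeLen F (N ^ 2 * (K - 1)) (2 * δ + 1) ∧
    ∀ d : Fin K → Fin N, Function.Surjective d →
      optLen F d δ = shortestCodeLen F (N ^ 2 * (K - 1)) (2 * δ + 1) :=
  optLen_worst_CFL_KgtN_general F N K hN hK δ
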